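/- arXiv:1810.00715 — 4 statements merged into one kernel-verified Lean document; each statement's English description precedes it below -/
import Mathlib

section
/- Let c ≥ 5 be a real constant and let n_1 = n, n_{l+1} = (log2 n_l)^{c-1}. Suppose m is an index such that n_l ≥ (c²+c)^{c-1} for all l ≤ m-1. Then for every i with 1 ≤ i ≤ m-1, m - i ≤ log2* n_i, where log2* x is the number of times log2 must be iteratively applied to x before the result is at most 1. -/
/-- The iterated base-2 logarithm: the least number of times `log2` must be applied to `x`
before the result is at most `1`. -/
noncomputable def log2Star (x : ℝ) : ℕ := sInf {k : ℕ | (Real.logb 2)^[k] x ≤ 1}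

/-!
Write `L_l = log2 n_l` and `p = c - 1`, so that `L_{l+1} = p · log2 L_l`. Applying `log2` once
more to a lower bound `L_j / p²` for `log2^[j+1-i] n_i` loses `log2 (p²) ≤ p`, which the
largeness `L_{j+1} ≥ p (p + 2)` absorbs; hence `log2^[j+1-i] n_i ≥ L_j / p² > 1` for every
`j ≤ m - 2`, i.e. the first `m - i` iterates of `log2` at `n_i` all exceed `1`.
-/

open Real

lemma logb_two_le_half {x : ℝ} (hx : 4 ≤ x) : logb 2 x ≤ x / 2 := by
  have hlog2 : 1 / 2 < log 2 := by linarith [log_two_gt_d9]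
  -- `log x = log 4 + log (x / 4)` and `log y ≤ y - 1`
  have hlog : log x ≤ 2 * log 2 + (x / 4 - 1) := by
    have h4 : log 4 = 2 * log 2 := by
      rw [show (4 : ℝ) = 2 ^ 2 by norm_num, log_pow]; norm_num
    have := log_le_sub_one_of_pos (show 0 < x / 4 by linarith)
    rw [log_div (by linarith) (by norm_num), h4] at this
    linarith
  rw [logb, div_le_iff₀ (log_pos one_lt_two)]
  nlinarith

lemma exists_iterate_logb_le_one (x : ℝ) : ∃ k, (logb 2)^[k] x ≤ 1 := by
  suffices h : ∀ n : ℕ, ∀ x : ℝ, x ≤ n → ∃ k, (logb 2)^[k] x ≤ 1 from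
    let ⟨n, hn⟩ := exists_nat_ge x; h n x hn
  intro n
  induction n with
  | zero => exact fun x hx => ⟨0, by norm_num at hx ⊢; linarith⟩
  | succ n ih =>
    intro x hx
    rcases le_or_gt x 1 with hx1 | hx1
    · exact ⟨0, hx1⟩
    · have hlog : logb 2 x ≤ n := by
        rw [logb_le_iff_le_rpow one_lt_two (by linarith), rpow_natCast]
        calc x ≤ n + 1 := by exact_mod_cast hx
          _ ≤ 2 ^ n := by exact_mod_cast Nat.lt_two_pow_self
      obtain ⟨k, hk⟩ := ih _ hlog
      exact ⟨k + 1, hk⟩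

lemma le_log2Star_of_one_lt_iterate {K : ℕ} {x : ℝ} (h : ∀ k < K, 1 < (logb 2)^[k] x) :
    K ≤ log2Star x :=
  le_csInf (exists_iterate_logb_le_one x) fun k hk => not_lt.1 fun hkK => (h k hkK).not_ge hk

lemma div_sq_le_logb_of_div_sq_le {p s y : ℝ} (hp : 4 ≤ p) (hs : 0 < s)
    (hlarge : p * (p + 2) ≤ logb 2 (s ^ p)) (hy : s / p ^ 2 ≤ y) :
    logb 2 (s ^ p) / p ^ 2 ≤ logb 2 y := by
  have hlogp : 2 * logb 2 p ≤ p := by linarith [logb_two_le_half hp]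
  rw [logb_rpow_eq_mul_logb_of_pos hs] at hlarge ⊢
  calc p * logb 2 s / p ^ 2 ≤ logb 2 s - 2 * logb 2 p := by
        rw [div_le_iff₀ (by positivity)]
        nlinarith
    _ = logb 2 (s / p ^ 2) := by
        rw [logb_div hs.ne' (by positivity), logb_pow]; push_cast; ring
    _ ≤ logb 2 y := logb_le_logb_of_le one_lt_two (by positivity) hy

lemma logb_div_sq_le_iterate_logb {p : ℝ} (hp : 4 ≤ p) {N : ℕ → ℝ} {i j : ℕ}
    (hrec : ∀ l, i ≤ l → N (l + 1) = logb 2 (N l) ^ p) (hij : i ≤ j)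
    (hlarge : ∀ l, i ≤ l → l ≤ j → p * (p + 2) ≤ logb 2 (N l)) :
    logb 2 (N j) / p ^ 2 ≤ (logb 2)^[j + 1 - i] (N i) := by
  induction j, hij using Nat.le_induction with
  | base =>
    rw [Nat.add_sub_cancel_left, Function.iterate_one]
    exact div_le_self (by nlinarith [hlarge i le_rfl le_rfl]) (by nlinarith)
  | succ j hij ih =>
    have hL : 0 < logb 2 (N j) := by nlinarith [hlarge j hij (by omega)]
    rw [show j + 1 + 1 - i = (j + 1 - i) + 1 by omega, Function.iterate_succ_apply', hrec j hij]
    refine div_sq_le_logb_of_div_sq_le hp hL ?_ (ih fun l hil hlj => hlarge l hil (by omega))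
    rw [← hrec j hij]
    exact hlarge (j + 1) (by omega) le_rfl

theorem stmt4_general (c : ℝ) (hc : 5 ≤ c) (nseq : ℕ → ℝ)
    (hrec : ∀ l, 1 ≤ l → nseq (l + 1) = Real.logb 2 (nseq l) ^ (c - 1))
    (m : ℕ) (hm : ∀ l, 1 ≤ l → l ≤ m - 1 → (c ^ 2 + c) ^ (c - 1) ≤ nseq l)
    (i : ℕ) (hi : 1 ≤ i) (him : i ≤ m - 1) :
    m - i ≤ log2Star (nseq i) := by
  set p := c - 1
  have hp : 4 ≤ p := by linarith
  have hM : 1 < (c ^ 2 + c) ^ p := one_lt_rpow (by nlinarith) (by linarith)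
  have hlarge : ∀ l, i ≤ l → l + 1 ≤ m - 1 → p * (p + 2) ≤ logb 2 (nseq l) := by
    intro l hil hlm
    have hL : 0 ≤ logb 2 (nseq l) :=
      logb_nonneg one_lt_two (hM.le.trans (hm l (by omega) (by omega)))
    have h := hm (l + 1) (by omega) hlm
    rw [hrec l (by omega), rpow_le_rpow_iff (by positivity) hL (by linarith)] at h
    nlinarith
  refine le_log2Star_of_one_lt_iterate fun k hk => ?_
  rcases Nat.eq_zero_or_pos k with rfl | hk0
  · exact hM.trans_le (hm i hi him)
  · have h := logb_div_sq_le_iterate_logb hp (j := i + k - 1) (fun l hl => hrec l (by omega))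
      (by omega) fun l hil hlj => hlarge l hil (by omega)
    rw [show i + k - 1 + 1 - i = k by omega] at h
    refine lt_of_lt_of_le ?_ h
    rw [lt_div_iff₀ (by positivity), one_mul]
    nlinarith [hlarge (i + k - 1) (by omega) (by omega)]

/-- Let `c ≥ 5`, `n_1 = n`, `n_{l+1} = (log2 n_l)^(c-1)`, and suppose `n_l ≥ (c²+c)^(c-1)`
for all `l ≤ m-1`.  Then for all `1 ≤ i ≤ m-1`, `m - i ≤ log2* n_i`. -/
theorem stmt4 (c : ℝ) (hc : 5 ≤ c) (n : ℝ) (nseq : ℕ → ℝ) (h1 : nseq 1 = n)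
    (hrec : ∀ l, 1 ≤ l → nseq (l + 1) = Real.logb 2 (nseq l) ^ (c - 1))
    (m : ℕ) (hm : ∀ l, 1 ≤ l → l ≤ m - 1 → (c ^ 2 + c) ^ (c - 1) ≤ nseq l)
    (i : ℕ) (hi : 1 ≤ i) (him : i ≤ m - 1) :
    m - i ≤ log2Star (nseq i) :=
  stmt4_general c hc nseq hrec m hm i hi him
end

section
/- Let c ≥ 5 be a real constant and let n_1 = n, n_{l+1} = (log2 n_l)^{c-1}, and suppose m satisfies n_l ≥ (c²+c)^{c-1} for all l ≤ m-1. Then for every i with 1 ≤ i ≤ m-1, the sum from l = i+1 to m of log2 n_l is strictly less than (3c² + 2c) · log2 log2 n_i. -/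
/-!
Write `L l = log₂ nₗ` and `t = log₂ (c² + c)`. The hypothesis gives `L l ≥ (c - 1) t` for
`l ≤ m - 1`, and the recursion reads `L (l + 1) = (c - 1) log₂ (L l)`. Since `log₂ x / x` is
decreasing, `(c - 1) log₂ x ≤ (19/20) x` holds for all `x ≥ (c - 1) t` as soon as it holds at
`x = (c - 1) t`, i.e. as soon as `log₂ ((c - 1) t) ≤ (19/20) t`, a numerical fact about `c ≥ 5`.
So `L` decays geometrically with ratio `19/20` from `i + 1` on, and the sum is at most
`20 L (i + 1) = 20 (c - 1) log₂ (L i) < (3c² + 2c) log₂ (L i)`.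
-/

open Real Finset

namespace Real

theorem logb_div_self_le_of_le {b a x : ℝ} (hb : 1 < b) (ha : exp 1 ≤ a) (hax : a ≤ x) :
    logb b x / x ≤ logb b a / a := by
  have h := log_div_self_antitoneOn ha (ha.trans hax) hax
  simp only [logb, div_right_comm _ (log b)]
  exact div_le_div_of_nonneg_right h (log_pos hb).le

theorem natCast_le_mul_logb {b x : ℝ} (hb : 1 < b) {p q : ℕ}
    (h : b ^ p ≤ x ^ q) : (p : ℝ) ≤ q * logb b x := by
  have := logb_le_logb_of_le hb (by positivity) h
  rwa [logb_pow, logb_pow, logb_self_eq_one hb, mul_one] at this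

theorem mul_logb_le_natCast {b x : ℝ} (hb : 1 < b) (hx : 0 < x) {p q : ℕ}
    (h : x ^ q ≤ b ^ p) : q * logb b x ≤ p := by
  have := logb_le_logb_of_le hb (by positivity) h
  rwa [logb_pow, logb_pow, logb_self_eq_one hb, mul_one] at this

theorem mul_logb_le_logb_of_rpow_le {b y s x : ℝ} (hb : 1 < b) (hy : 0 < y) (h : y ^ s ≤ x) :
    s * logb b y ≤ logb b x := by
  rw [← logb_rpow_eq_mul_logb_of_pos hy]
  exact logb_le_logb_of_le hb (by positivity) h

end Real

theorem logb_two_le_mul_of_le {t : ℝ} (ht : 28 / 5 ≤ t) : logb 2 t ≤ 25 / 56 * t := by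
  have he : exp 1 ≤ 28 / 5 := by linarith [exp_one_lt_d9]
  have hdiv := logb_div_self_le_of_le one_lt_two he ht
  have h285 := mul_logb_le_natCast (x := 28 / 5) (p := 5) (q := 2) one_lt_two (by norm_num)
    (by norm_num)
  push_cast at h285
  rw [div_le_iff₀ (by linarith)] at hdiv
  nlinarith

section

variable {c : ℝ}

theorem le_logb_two_sq_add_self (hc : 5 ≤ c) : 49 / 10 ≤ logb 2 (c ^ 2 + c) := by
  have h : (2 : ℝ) ^ 49 ≤ (c ^ 2 + c) ^ 10 :=
    calc (2 : ℝ) ^ 49 ≤ 30 ^ 10 := by norm_num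
      _ ≤ (c ^ 2 + c) ^ 10 := by gcongr; nlinarith
  have := natCast_le_mul_logb one_lt_two h
  push_cast at this
  linarith

theorem two_mul_logb_two_sub_one_le (hc : 1 < c) : 2 * logb 2 (c - 1) ≤ logb 2 (c ^ 2 + c) := by
  have := logb_le_logb_of_le one_lt_two (by nlinarith) (show (c - 1) ^ 2 ≤ c ^ 2 + c by nlinarith)
  rwa [logb_pow, Nat.cast_ofNat] at this

theorem two_div_three_add_two_mul_logb_two_sub_one_le (hc : 5 ≤ c) (hc' : c ≤ 13 / 2) :
    2 / 3 + 2 * logb 2 (c - 1) ≤ logb 2 (c ^ 2 + c) := by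
  have h85 := natCast_le_mul_logb (x := 8 / 5) (p := 2) (q := 3) one_lt_two (by norm_num)
  have := logb_le_logb_of_le one_lt_two (by nlinarith)
    (show 8 / 5 * (c - 1) ^ 2 ≤ c ^ 2 + c by nlinarith)
  rw [logb_mul (by norm_num) (by nlinarith), logb_pow] at this
  push_cast at h85 this
  linarith

theorem logb_two_logb_two_sq_add_self_le (hc : 5 ≤ c) (hc' : c ≤ 13 / 2) :
    logb 2 (logb 2 (c ^ 2 + c)) ≤ 5 / 2 := by
  have ht : 8 * logb 2 (c ^ 2 + c) ≤ 45 := by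
    have h : (c ^ 2 + c) ^ 8 ≤ (2 : ℝ) ^ 45 :=
      calc (c ^ 2 + c) ^ 8 ≤ (195 / 4 : ℝ) ^ 8 := by gcongr; nlinarith
        _ ≤ 2 ^ 45 := by norm_num
    exact_mod_cast mul_logb_le_natCast one_lt_two (by positivity) h
  have h458 := mul_logb_le_natCast (x := 45 / 8) (p := 5) (q := 2) one_lt_two (by norm_num)
    (by norm_num)
  have := logb_le_logb_of_le one_lt_two (by linarith [le_logb_two_sq_add_self hc])
    (show logb 2 (c ^ 2 + c) ≤ 45 / 8 by linarith)
  push_cast at h458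
  linarith

theorem le_logb_two_sq_add_self_of_le (hc : 13 / 2 ≤ c) : 28 / 5 ≤ logb 2 (c ^ 2 + c) := by
  have h : (2 : ℝ) ^ 28 ≤ (c ^ 2 + c) ^ 5 :=
    calc (2 : ℝ) ^ 28 ≤ (195 / 4) ^ 5 := by norm_num
      _ ≤ (c ^ 2 + c) ^ 5 := by gcongr; nlinarith
  have := natCast_le_mul_logb one_lt_two h
  push_cast at this
  linarith

theorem logb_two_mul_logb_two_le (hc : 5 ≤ c) :
    logb 2 ((c - 1) * logb 2 (c ^ 2 + c)) ≤ 19 / 20 * logb 2 (c ^ 2 + c) := by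
  have ht := le_logb_two_sq_add_self hc
  rw [logb_mul (by linarith) (by linarith)]
  -- near `c = 5` the slack is small and `(c - 1)²` must be compared with `c² + c` more sharply
  rcases le_total c (13 / 2) with hc' | hc'
  · linarith [two_div_three_add_two_mul_logb_two_sub_one_le hc hc',
      logb_two_logb_two_sq_add_self_le hc hc']
  · linarith [two_mul_logb_two_sub_one_le (by linarith : 1 < c),
      logb_two_le_mul_of_le (le_logb_two_sq_add_self_of_le hc')]

theorem mul_logb_two_le_of_le (hc : 5 ≤ c) {x : ℝ} (hx : (c - 1) * logb 2 (c ^ 2 + c) ≤ x) :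
    (c - 1) * logb 2 x ≤ 19 / 20 * x := by
  set t := logb 2 (c ^ 2 + c)
  have ht : 49 / 10 ≤ t := le_logb_two_sq_add_self hc
  have ha : exp 1 ≤ (c - 1) * t := by nlinarith [exp_one_lt_d9]
  have hc1 : 0 < c - 1 := by linarith
  have hx0 : 0 < x := by nlinarith
  calc (c - 1) * logb 2 x = (c - 1) * x * (logb 2 x / x) := by field_simp
    _ ≤ (c - 1) * x * (logb 2 ((c - 1) * t) / ((c - 1) * t)) :=
      mul_le_mul_of_nonneg_left (logb_div_self_le_of_le one_lt_two ha hx) (by positivity)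
    _ = x * logb 2 ((c - 1) * t) / t := by field_simp
    _ ≤ x * (19 / 20 * t) / t := by gcongr; exact logb_two_mul_logb_two_le hc
    _ = 19 / 20 * x := by field_simp

end

theorem one_sub_mul_sum_Icc_le_of_le_mul {a : ℕ → ℝ} {r : ℝ} {j m : ℕ} (hjm : j ≤ m)
    (hr : 0 ≤ r) (ham : 0 ≤ a m) (hstep : ∀ l, j ≤ l → l < m → a (l + 1) ≤ r * a l) :
    (1 - r) * ∑ l ∈ Icc j m, a l ≤ a j := by
  induction hjm using Nat.decreasingInduction with
  | self => simp only [Icc_self, sum_singleton]; nlinarith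
  | of_succ k hkm ih =>
    rw [← add_sum_Ioc_eq_sum_Icc hkm.le, ← Icc_add_one_left_eq_Ioc]
    have hk := hstep k le_rfl hkm
    have := ih fun l hl hlm => hstep l (by omega) hlm
    linarith

theorem stmt5_general (c : ℝ) (hc : 5 ≤ c) (nseq : ℕ → ℝ)
    (hrec : ∀ l, 1 ≤ l → nseq (l + 1) = Real.logb 2 (nseq l) ^ (c - 1))
    (m : ℕ) (hm : ∀ l, 1 ≤ l → l ≤ m - 1 → (c ^ 2 + c) ^ (c - 1) ≤ nseq l)
    (i : ℕ) (hi : 1 ≤ i) (him : i ≤ m - 1) :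
    ∑ l ∈ Finset.Icc (i + 1) m, Real.logb 2 (nseq l)
      < (3 * c ^ 2 + 2 * c) * Real.logb 2 (Real.logb 2 (nseq i)) := by
  have ht := le_logb_two_sq_add_self hc
  have hlow : ∀ l, 1 ≤ l → l ≤ m - 1 → (c - 1) * logb 2 (c ^ 2 + c) ≤ logb 2 (nseq l) :=
    fun l hl hlm => mul_logb_le_logb_of_rpow_le one_lt_two (by positivity) (hm l hl hlm)
  have hnext : ∀ l, 1 ≤ l → l ≤ m - 1 →
      logb 2 (nseq (l + 1)) = (c - 1) * logb 2 (logb 2 (nseq l)) := fun l hl hlm => by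
    rw [hrec l hl, logb_rpow_eq_mul_logb_of_pos (by nlinarith [hlow l hl hlm])]
  have hgeom : (1 - 19 / 20) * ∑ l ∈ Icc (i + 1) m, logb 2 (nseq l) ≤ logb 2 (nseq (i + 1)) := by
    refine one_sub_mul_sum_Icc_le_of_le_mul (by omega) (by norm_num) ?_ fun l hl hlm => ?_
    · obtain ⟨k, rfl⟩ : ∃ k, m = k + 1 := ⟨m - 1, by omega⟩
      rw [hnext k (by omega) (by omega)]
      exact mul_nonneg (by linarith)
        (logb_nonneg one_lt_two (by nlinarith [hlow k (by omega) (by omega)]))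
    · rw [hnext l (by omega) (by omega)]
      exact mul_logb_two_le_of_le hc (hlow l (by omega) (by omega))
  have hlogi : 0 < logb 2 (logb 2 (nseq i)) :=
    logb_pos one_lt_two (by nlinarith [hlow i hi him])
  have hcoef : 20 * (c - 1) < 3 * c ^ 2 + 2 * c := by nlinarith
  rw [hnext i hi him] at hgeom
  nlinarith [mul_lt_mul_of_pos_right hcoef hlogi]

/-- Let `c ≥ 5`, `n_1 = n`, `n_{l+1} = (log2 n_l)^(c-1)`, and suppose `n_l ≥ (c²+c)^(c-1)`
for all `l ≤ m-1`.  Then for every `1 ≤ i ≤ m-1`,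
`∑_{l=i+1}^{m} log2 n_l < (3c² + 2c) · log2 log2 n_i`. -/
theorem stmt5 (c : ℝ) (hc : 5 ≤ c) (n : ℝ) (nseq : ℕ → ℝ) (h1 : nseq 1 = n)
    (hrec : ∀ l, 1 ≤ l → nseq (l + 1) = Real.logb 2 (nseq l) ^ (c - 1))
    (m : ℕ) (hm : ∀ l, 1 ≤ l → l ≤ m - 1 → (c ^ 2 + c) ^ (c - 1) ≤ nseq l)
    (i : ℕ) (hi : 1 ≤ i) (him : i ≤ m - 1) :
    ∑ l ∈ Finset.Icc (i + 1) m, Real.logb 2 (nseq l)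
      < (3 * c ^ 2 + 2 * c) * Real.logb 2 (Real.logb 2 (nseq i)) :=
  stmt5_general c hc nseq hrec m hm i hi him
end

section
/- Let P be a convex polygon with k ≥ 3 vertices. If a leaf of a linear decision tree over ℝ² (each internal node tests the sign of an affine function, so each leaf corresponds to an intersection of open halfplanes) has its associated region equal to the interior of P, then the depth of that leaf is at least k. -/
/-!
Let `H` be the polygon and `S` the set of affine functions, signed so as to be positive on the
branch taken, along the path. Since `H` is convex with nonempty interior, `H` is the closure of
its interior, i.e. `H = {x | ∀ g ∈ S, 0 ≤ g x}`. If at most one `g ∈ S` vanished at a vertex `v`,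
a direction in its kernel would move `v` both ways inside `H`, so `v` would not be extreme: every
vertex makes at least two tests vanish. Conversely a test vanishes on a line, which contains at
most two vertices, since no three vertices of a convex polygon are collinear. Counting the pairs
(vertex, vanishing test) in both ways gives `2 k ≤ 2 |S| ≤ 2 · depth`.
-/

open Set Filter Topology Module Finset

section ExtremePoints

variable {E : Type*} [AddCommGroup E] [Module ℝ E]

theorem Set.Finite.mem_extremePoints_convexHull [TopologicalSpace E] [T2Space E]
    [IsTopologicalAddGroup E] [ContinuousSMul ℝ E] [LocallyConvexSpace ℝ E] {s : Set E}
    (hs : s.Finite) {x : E} (hx : x ∈ s) (hxs : x ∉ convexHull ℝ (s \ {x})) :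
    x ∈ (convexHull ℝ s).extremePoints ℝ := by
  by_contra hext
  have hsub : (convexHull ℝ s).extremePoints ℝ ⊆ s \ {x} := fun y hy =>
    ⟨extremePoints_convexHull_subset hy, by rintro rfl; exact hext hy⟩
  have hKM := closure_convexHull_extremePoints (hs.isCompact_convexHull ℝ) (convex_convexHull ℝ s)
  apply hxs
  rw [← (hs.sdiff).isClosed_convexHull ℝ |>.closure_eq]
  exact closure_mono (convexHull_mono hsub) (hKM.symm ▸ subset_convexHull ℝ s hx)

theorem Finset.card_le_two_of_collinear_of_subset_extremePoints {A : Set E} {W : Finset E}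
    (hW : (W : Set E) ⊆ A.extremePoints ℝ) (hcol : Collinear ℝ (W : Set E)) : #W ≤ 2 := by
  by_contra! h
  have hbtw : ∀ x ∈ W, ∀ y ∈ W, ∀ z ∈ W, x ≠ y → y ≠ z → ¬Wbtw ℝ x y z :=
    fun x hx y hy z hz hxy hyz hb =>
      ((mem_extremePoints_iff_forall_segment.1 (hW hy)).2 x (hW hx).1 z (hW hz).1
        hb.mem_segment).elim hxy hyz.symm
  obtain ⟨a, ha, b, hb, c, hc, hab, hac, hbc⟩ := Finset.two_lt_card.1 h
  have habc : Collinear ℝ ({a, b, c} : Set E) :=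
    hcol.subset (by simp [Set.insert_subset_iff, ha, hb, hc])
  rcases habc.wbtw_or_wbtw_or_wbtw with h | h | h
  · exact hbtw a ha b hb c hc hab hbc h
  · exact hbtw b hb c hc a ha hbc hac.symm h
  · exact hbtw c hc a ha b hb hac.symm hab h

end ExtremePoints

section Collinear

variable {k V P : Type*} [Field k] [AddCommGroup V] [Module k V] [FiniteDimensional k V]

theorem affineSpan_eq_top_of_not_collinear [AddTorsor V P] (hV : finrank k V = 2) {s : Set P}
    (hs : ¬Collinear k s) : affineSpan k s = ⊤ := by
  have hne : s.Nonempty :=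
    Set.nonempty_iff_ne_empty.2 (by rintro rfl; exact hs (collinear_empty k P))
  rw [AffineSubspace.affineSpan_eq_top_iff_vectorSpan_eq_top_of_nonempty k V P hne]
  rw [collinear_iff_finrank_le_one] at hs
  exact Submodule.eq_top_of_finrank_eq (le_antisymm (Submodule.finrank_le _) (by omega))

theorem AffineMap.collinear_setOf_eq_zero (hV : finrank k V = 2) {g : V →ᵃ[k] k} (hg : g ≠ 0) :
    Collinear k {x | g x = 0} := by
  by_cases hlin : g.linear = 0
  · obtain ⟨q, rfl⟩ := g.linear_eq_zero_iff_exists_const.1 hlin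
    have hq : q ≠ 0 := by rintro rfl; exact hg rfl
    simpa [hq] using collinear_empty k V
  have hspan : vectorSpan k {x | g x = 0} ≤ LinearMap.ker g.linear := by
    rw [vectorSpan_def, Submodule.span_le]
    rintro _ ⟨x, hx, y, hy, rfl⟩
    rw [SetLike.mem_coe, LinearMap.mem_ker, g.linearMap_vsub, show g x = 0 from hx,
      show g y = 0 from hy, vsub_self]
  have hker := Module.Dual.finrank_ker_add_one_of_ne_zero hlin
  rw [collinear_iff_finrank_le_one]
  exact (Submodule.finrank_mono hspan).trans (by omega)

end Collinear

theorem AffineMap.apply_add_smul {k E : Type*} [Ring k] [AddCommGroup E] [Module k E]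
    (g : E →ᵃ[k] k) (v d : E) (t : k) : g (v + t • d) = g v + t * g.linear d := by
  rw [add_comm v, ← vadd_eq_add, g.map_vadd, map_smul, smul_eq_mul, vadd_eq_add, add_comm]

section Polyhedron

variable {E : Type*} [AddCommGroup E] [Module ℝ E]

theorem closure_setOf_forall_pos [TopologicalSpace E] [IsTopologicalAddGroup E]
    [ContinuousSMul ℝ E] {s : Set (E →ᵃ[ℝ] ℝ)} (hs : ∀ g ∈ s, Continuous g)
    (hne : {x | ∀ g ∈ s, 0 < g x}.Nonempty) :
    closure {x | ∀ g ∈ s, 0 < g x} = {x | ∀ g ∈ s, 0 ≤ g x} := by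
  refine subset_antisymm (closure_minimal (fun x hx g hg => (hx g hg).le) ?_) fun x hx => ?_
  · simp only [ofPred_forall]
    exact isClosed_biInter fun g hg => isClosed_le continuous_const (hs g hg)
  obtain ⟨y, hy⟩ := hne
  have hseg : openSegment ℝ x y ⊆ {x | ∀ g ∈ s, 0 < g x} := by
    rintro _ ⟨a, b, ha, hb, hab, rfl⟩ g hg
    rw [Convex.combo_affine_apply hab, smul_eq_mul, smul_eq_mul]
    nlinarith [hx g hg, hy g hg]
  exact closure_mono hseg (segment_subset_closure_openSegment (left_mem_segment ℝ x y))

theorem Convex.eq_setOf_forall_nonneg_of_interior_eq [TopologicalSpace E]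
    [IsTopologicalAddGroup E] [ContinuousSMul ℝ E] {H : Set E} (hconv : Convex ℝ H)
    (hclosed : IsClosed H) {s : Set (E →ᵃ[ℝ] ℝ)} (hs : ∀ g ∈ s, Continuous g)
    (hint : interior H = {x | ∀ g ∈ s, 0 < g x}) (hne : (interior H).Nonempty) :
    H = {x | ∀ g ∈ s, 0 ≤ g x} := by
  rw [← hclosed.closure_eq, ← hconv.closure_interior_eq_closure_of_nonempty_interior hne, hint,
    closure_setOf_forall_pos hs (hint ▸ hne)]

theorem eq_zero_of_mem_extremePoints_setOf_forall_nonneg {s : Finset (E →ᵃ[ℝ] ℝ)} {v d : E}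
    (hv : v ∈ {x | ∀ g ∈ s, 0 ≤ g x}.extremePoints ℝ) (hd : ∀ g ∈ s, g v = 0 → g.linear d = 0) :
    d = 0 := by
  have hnear : ∀ᶠ t in 𝓝 (0 : ℝ), v + t • d ∈ {x | ∀ g ∈ s, 0 ≤ g x} := by
    refine (eventually_all_finset s).2 fun g hg => ?_
    simp only [g.apply_add_smul]
    rcases (hv.1 g hg).eq_or_lt with hgv | hgv
    · exact .of_forall fun t => by rw [← hgv, hd g hg hgv.symm, mul_zero, add_zero]
    · exact (continuous_const.add (continuous_id.mul continuous_const)).tendsto' 0 _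
        (by simp) |>.eventually (lt_mem_nhds hgv) |>.mono fun _ => le_of_lt
  have hnear' : ∀ᶠ t in 𝓝 (0 : ℝ), v + (-t) • d ∈ {x | ∀ g ∈ s, 0 ≤ g x} :=
    (continuous_neg.tendsto' 0 0 neg_zero).eventually hnear
  obtain ⟨t, ⟨hpos, hneg⟩, ht⟩ :=
    ((hnear.and hnear').filter_mono nhdsWithin_le_nhds |>.and self_mem_nhdsWithin).exists
      (f := 𝓝[≠] (0 : ℝ))
  have hmid : v ∈ openSegment ℝ (v + t • d) (v + (-t) • d) :=
    ⟨1 / 2, 1 / 2, by norm_num, by norm_num, by norm_num, by module⟩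
  have htd := hv.2 hpos hneg hmid
  rw [add_eq_left, smul_eq_zero] at htd
  exact htd.resolve_left ht

theorem finrank_le_card_filter_eq_zero_of_mem_extremePoints [FiniteDimensional ℝ E]
    {s : Finset (E →ᵃ[ℝ] ℝ)} {v : E} (hv : v ∈ {x | ∀ g ∈ s, 0 ≤ g x}.extremePoints ℝ) :
    finrank ℝ E ≤ #{g ∈ s | g v = 0} := by
  by_contra! hlt
  let φ : E →ₗ[ℝ] ({g ∈ s | g v = 0} → ℝ) := LinearMap.pi fun g => g.1.linear
  obtain ⟨d, hd, hd0⟩ := (Submodule.ne_bot_iff _).1 <| LinearMap.ker_ne_bot_of_finrank_lt (f := φ)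
    (by rwa [finrank_fintype_fun_eq_card, Fintype.card_coe])
  refine hd0 (eq_zero_of_mem_extremePoints_setOf_forall_nonneg hv fun g hg hgv => ?_)
  exact congrFun (LinearMap.mem_ker.1 hd) ⟨g, Finset.mem_filter.2 ⟨hg, hgv⟩⟩

end Polyhedron

section Polygon

variable {E : Type*} [NormedAddCommGroup E] [NormedSpace ℝ E] [FiniteDimensional ℝ E]
  {V : Finset E}

theorem Finset.interior_convexHull_nonempty_of_subset_extremePoints (hE : finrank ℝ E = 2)
    (hV : 3 ≤ #V) (hext : (V : Set E) ⊆ (convexHull ℝ (V : Set E)).extremePoints ℝ) :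
    (interior (convexHull ℝ (V : Set E))).Nonempty := by
  rw [(convex_convexHull ℝ _).interior_nonempty_iff_affineSpan_eq_top, affineSpan_convexHull]
  refine affineSpan_eq_top_of_not_collinear hE fun hcol => ?_
  have := V.card_le_two_of_collinear_of_subset_extremePoints hext hcol
  omega

theorem Finset.card_filter_eq_zero_le_two (hE : finrank ℝ E = 2) {A : Set E}
    (hext : (V : Set E) ⊆ A.extremePoints ℝ) {g : E →ᵃ[ℝ] ℝ} (hg : g ≠ 0) :
    #{v ∈ V | g v = 0} ≤ 2 :=
  card_le_two_of_collinear_of_subset_extremePoints (fun _ hv => hext (mem_filter.1 hv).1)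
    ((AffineMap.collinear_setOf_eq_zero hE hg).subset fun _ hv => (mem_filter.1 hv).2)

end Polygon

def branchFun {E : Type*} [AddCommGroup E] [Module ℝ E] (f : (E →ᵃ[ℝ] ℝ) × Bool) : E →ᵃ[ℝ] ℝ :=
  if f.2 then f.1 else -f.1

theorem iInter_branch_eq_setOf_forall_pos {E : Type*} [AddCommGroup E] [Module ℝ E]
    (path : List ((E →ᵃ[ℝ] ℝ) × Bool)) :
    (⋂ f ∈ path, if f.2 then {x : E | 0 < f.1 x} else {x : E | f.1 x < 0}) =
      {x | ∀ g ∈ path.map branchFun, 0 < g x} := by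
  ext x
  simp only [mem_iInter, List.forall_mem_map, branchFun, mem_ofPred_eq]
  refine forall₂_congr fun f _ => ?_
  cases f.2 <;> simp

/-- If a leaf of a linear decision tree over ℝ² (whose root-to-leaf path is a list of affine
tests, each leaf region being the intersection of the corresponding open halfplanes) has its
region equal to the interior of a convex polygon with `k ≥ 3` vertices, then the depth of the
leaf (the length of the path) is at least `k`. -/
theorem stmt11 (V : Finset (ℝ × ℝ)) (k : ℕ) (hk : 3 ≤ k) (hcard : V.card = k)
    (hvert : ∀ v ∈ V, v ∉ convexHull ℝ ((V.erase v : Finset (ℝ × ℝ)) : Set (ℝ × ℝ)))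
    (path : List (((ℝ × ℝ) →ᵃ[ℝ] ℝ) × Bool))
    (hregion : (⋂ f ∈ path, if f.2 then {x : ℝ × ℝ | 0 < f.1 x} else {x : ℝ × ℝ | f.1 x < 0})
      = interior (convexHull ℝ (V : Set (ℝ × ℝ)))) :
    k ≤ path.length := by
  classical
  set H := convexHull ℝ (V : Set (ℝ × ℝ))
  set S := (path.map branchFun).toFinset
  have h2 : finrank ℝ (ℝ × ℝ) = 2 := by simp
  have hint : interior H = {x | ∀ g ∈ S, 0 < g x} := by
    rw [← hregion, iInter_branch_eq_setOf_forall_pos]; simp [S]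
  have hext : (V : Set (ℝ × ℝ)) ⊆ H.extremePoints ℝ := fun v hv =>
    V.finite_toSet.mem_extremePoints_convexHull hv (by simpa using hvert v hv)
  have hne : (interior H).Nonempty :=
    V.interior_convexHull_nonempty_of_subset_extremePoints h2 (by omega) hext
  have hH : H = {x | ∀ g ∈ S, 0 ≤ g x} :=
    (convex_convexHull ℝ _).eq_setOf_forall_nonneg_of_interior_eq
      (V.finite_toSet.isClosed_convexHull ℝ) (s := (S : Set ((ℝ × ℝ) →ᵃ[ℝ] ℝ)))
      (fun g _ => g.continuous_of_finiteDimensional) hint hne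
  have hactive : ∀ v ∈ V, 2 ≤ #{g ∈ S | g v = 0} := fun v hv =>
    h2 ▸ finrank_le_card_filter_eq_zero_of_mem_extremePoints (hH ▸ hext hv)
  obtain ⟨y, hy⟩ := hint ▸ hne
  have hzeros : ∀ g ∈ S, #{v ∈ V | g v = 0} ≤ 2 := fun g hg =>
    V.card_filter_eq_zero_le_two h2 hext (by rintro rfl; exact lt_irrefl _ (hy 0 hg))
  have hcount := card_mul_le_card_mul (fun v (g : (ℝ × ℝ) →ᵃ[ℝ] ℝ) => g v = 0) hactive hzeros
  have hdepth : #S ≤ path.length := (List.toFinset_card_le _).trans (List.length_map _).le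
  omega
end

section
/- A bounded convex polygon in the plane with k vertices cannot be expressed as an intersection of fewer than k closed halfplanes. -/
/-!
Count incidences between the vertices and the boundary lines of the non-constant halfplanes.
A vertex is an extreme point of the intersection, so the constraints vanishing at it must have
normals spanning the plane: otherwise a common direction `d` in their kernels lets one move
from the vertex to both `v ± ε d` inside every halfplane. Hence every vertex lies on at least
two boundary lines. Conversely a line carries at most two vertices, since of three collinear
points one lies between the other two. Double counting gives `2 k ≤ 2 |H|`.
-/

open Finset Module Filter Topology

section LinearAlgebra

variable {k V P : Type*} [Field k] [AddCommGroup V] [Module k V] [AddTorsor V P]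

theorem Module.Dual.exists_ne_zero_forall_apply_eq_zero_of_card_lt_finrank [FiniteDimensional k V]
    (G : Finset (Dual k V)) (hG : #G < finrank k V) : ∃ d : V, d ≠ 0 ∧ ∀ φ ∈ G, φ d = 0 := by
  let evalAll : V →ₗ[k] G → k := LinearMap.pi fun φ : G ↦ (φ : Dual k V)
  have hker : LinearMap.ker evalAll ≠ ⊥ :=
    LinearMap.ker_ne_bot_of_finrank_lt (by simpa using hG)
  obtain ⟨d, hd, hd0⟩ := Submodule.ne_bot_iff _ |>.mp hker
  exact ⟨d, hd0, fun φ hφ ↦ congrFun hd ⟨φ, hφ⟩⟩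

theorem AffineMap.collinear_preimage_singleton [FiniteDimensional k V] (hV : finrank k V = 2)
    (f : P →ᵃ[k] k) (hf : f.linear ≠ 0) (c : k) : Collinear k (f ⁻¹' {c}) := by
  have hspan : vectorSpan k (f ⁻¹' {c}) ≤ LinearMap.ker f.linear := by
    rw [vectorSpan_def, Submodule.span_le]
    rintro _ ⟨p, hp, q, hq, rfl⟩
    simp_all [f.linearMap_vsub]
  have hker : finrank k (LinearMap.ker f.linear) + 1 = 2 :=
    hV ▸ Module.Dual.finrank_ker_add_one_of_ne_zero hf
  rw [collinear_iff_finrank_le_one]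
  have := Submodule.finrank_mono hspan
  omega

end LinearAlgebra

section Convexity

variable {𝕜 E : Type*} [Field 𝕜] [LinearOrder 𝕜] [IsStrictOrderedRing 𝕜] [AddCommGroup E]
  [Module 𝕜 E] {s : Set E} {x : E}

theorem mem_extremePoints_convexHull_of_notMem_convexHull_sdiff (hxs : x ∈ s)
    (hx : x ∉ convexHull 𝕜 (s \ {x})) : x ∈ (convexHull 𝕜 s).extremePoints 𝕜 := by
  rw [mem_extremePoints_iff_left]
  refine ⟨subset_convexHull 𝕜 s hxs, fun y hy z hz hyz ↦ ?_⟩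
  rcases (s \ {x}).eq_empty_or_nonempty with hempty | hne
  · rw [← Set.insert_eq_of_mem hxs, ← Set.insert_sdiff_singleton, hempty,
      LawfulSingleton.insert_empty_eq, convexHull_singleton] at hy
    exact hy
  rw [← Set.insert_eq_of_mem hxs, ← Set.insert_sdiff_singleton, convexHull_insert hne,
    convexJoin_singleton_left] at hy hz
  simp only [Set.mem_iUnion] at hy hz
  obtain ⟨y', hy', a₁, b₁, ha₁, hb₁, hab₁, rfl⟩ := hy
  obtain ⟨z', hz', a₂, b₂, ha₂, hb₂, hab₂, rfl⟩ := hz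
  obtain ⟨c₁, c₂, hc₁, hc₂, hc, hcx⟩ := hyz
  -- Unless `y = x`, solving `x = c₁ y + c₂ z` for `x` makes it a convex combination of `y'`, `z'`.
  rcases hb₁.eq_or_lt with rfl | hb₁
  · simp [show a₁ = 1 by linarith]
  exfalso
  obtain rfl : a₁ = 1 - b₁ := by linarith
  obtain rfl : a₂ = 1 - b₂ := by linarith
  obtain rfl : c₂ = 1 - c₁ := by linarith
  have hkey : (c₁ * b₁ + (1 - c₁) * b₂) • x = (c₁ * b₁) • y' + ((1 - c₁) * b₂) • z' := by
    linear_combination (norm := module) -hcx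
  set l := c₁ * b₁ + (1 - c₁) * b₂
  have hl : 0 < l := by positivity
  have hx_eq : x = (l⁻¹ * (c₁ * b₁)) • y' + (l⁻¹ * ((1 - c₁) * b₂)) • z' := by
    rw [mul_smul l⁻¹, mul_smul l⁻¹, ← smul_add, ← hkey, inv_smul_smul₀ hl.ne']
  have hmem : (l⁻¹ * (c₁ * b₁)) • y' + (l⁻¹ * ((1 - c₁) * b₂)) • z' ∈ convexHull 𝕜 (s \ {x}) :=
    convex_convexHull 𝕜 _ hy' hz' (by positivity) (by positivity)
      (by rw [← mul_add, inv_mul_cancel₀ hl.ne'])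
  exact hx (hx_eq ▸ hmem)

theorem card_le_two_of_collinear_of_subset (hs : ∀ x ∈ s, x ∉ convexHull 𝕜 (s \ {x}))
    {W : Finset E} (hWs : ↑W ⊆ s) (hW : Collinear 𝕜 (W : Set E)) : #W ≤ 2 := by
  have not_wbtw : ∀ x ∈ W, ∀ y ∈ W, ∀ z ∈ W, x ≠ y → z ≠ y → ¬ Wbtw 𝕜 x y z :=
    fun x hx y hy z hz hxy hzy h ↦ hs y (hWs hy)
      (segment_subset_convexHull (s := s \ {y}) ⟨hWs hx, hxy⟩ ⟨hWs hz, hzy⟩ h.mem_segment)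
  by_contra! hW3
  obtain ⟨u, hu, v, hv, w, hw, huv, huw, hvw⟩ := two_lt_card.mp hW3
  have hcol : Collinear 𝕜 ({u, v, w} : Set E) := hW.subset (by simp [Set.insert_subset_iff, *])
  rcases hcol.wbtw_or_wbtw_or_wbtw with h | h | h
  · exact not_wbtw u hu v hv w hw huv hvw.symm h
  · exact not_wbtw v hv w hw u hu hvw huw h
  · exact not_wbtw w hw u hu v hv huw.symm huv.symm h

end Convexity

section Polyhedra

variable {E : Type*} [AddCommGroup E] [Module ℝ E]

theorem AffineMap.apply_add_smul_s12 (f : E →ᵃ[ℝ] ℝ) (v d : E) (t : ℝ) :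
    f (v + t • d) = f v + t * f.linear d := by
  rw [add_comm v, ← vadd_eq_add, f.map_vadd, map_smul, vadd_eq_add, smul_eq_mul, add_comm]

theorem eventually_forall_nonneg_add_smul {H : Finset (E →ᵃ[ℝ] ℝ)} {v d : E}
    (hv : ∀ f ∈ H, 0 ≤ f v) (hd : ∀ f ∈ H, f v = 0 → f.linear d = 0) :
    ∀ᶠ t in 𝓝 (0 : ℝ), ∀ f ∈ H, 0 ≤ f (v + t • d) := by
  rw [eventually_all_finset]
  intro f hf
  simp_rw [f.apply_add_smul_s12]
  rcases (hv f hf).eq_or_lt with hfv | hfv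
  · exact .of_forall fun t ↦ by simp [← hfv, hd f hf hfv.symm]
  · have hcont : Tendsto (fun t : ℝ ↦ f v + t * f.linear d) (𝓝 0) (𝓝 (f v)) := by
      have := (show Continuous fun t : ℝ ↦ f v + t * f.linear d by fun_prop).tendsto 0
      simpa using this
    exact (hcont.eventually (lt_mem_nhds hfv)).mono fun _ ↦ le_of_lt

theorem notMem_extremePoints_of_eventually_add_smul_mem {A : Set E} {v d : E} (hd : d ≠ 0)
    (h : ∀ᶠ t in 𝓝 (0 : ℝ), v + t • d ∈ A) : v ∉ A.extremePoints ℝ := by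
  obtain ⟨ε, hε, hball⟩ := Metric.eventually_nhds_iff.mp h
  have hmem : ∀ t, |t| < ε → v + t • d ∈ A := fun t ht ↦ hball (by simpa using ht)
  intro hv
  have hmid : v ∈ openSegment ℝ (v + (ε / 2) • d) (v + (-(ε / 2)) • d) :=
    ⟨1 / 2, 1 / 2, by norm_num, by norm_num, by norm_num, by module⟩
  have hε2 : |ε / 2| < ε := by rw [abs_of_pos (by positivity)]; linarith
  have h := (mem_extremePoints_iff_left.mp hv).2 _ (hmem _ hε2) _ (hmem _ (by rwa [abs_neg])) hmid
  simp [hd, hε.ne'] at h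

open Classical in
theorem finrank_le_card_active_of_mem_extremePoints [FiniteDimensional ℝ E]
    {H : Finset (E →ᵃ[ℝ] ℝ)} {v : E}
    (hv : v ∈ (⋂ f ∈ H, {x | 0 ≤ f x}).extremePoints ℝ) :
    finrank ℝ E ≤ #{f ∈ H | f.linear ≠ 0 ∧ f v = 0} := by
  by_contra! hlt
  obtain ⟨d, hd0, hd⟩ := Dual.exists_ne_zero_forall_apply_eq_zero_of_card_lt_finrank
    ({f ∈ H | f.linear ≠ 0 ∧ f v = 0}.image AffineMap.linear) (card_image_le.trans_lt hlt)
  have hvH : ∀ f ∈ H, 0 ≤ f v := by simpa using extremePoints_subset hv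
  have hactive : ∀ f ∈ H, f v = 0 → f.linear d = 0 := fun f hf hfv ↦ by
    by_cases hlin : f.linear = 0
    · simp [hlin]
    · exact hd _ (mem_image_of_mem _ (by simp [hf, hlin, hfv]))
  refine notMem_extremePoints_of_eventually_add_smul_mem hd0 ?_ hv
  simpa using eventually_forall_nonneg_add_smul hvH hactive

end Polyhedra

/-- A bounded convex polygon in the plane with `k` vertices (the convex hull of `k` points,
none of which lies in the convex hull of the others) cannot be expressed as an intersection of
fewer than `k` closed halfplanes. -/
theorem stmt12 (V : Finset (ℝ × ℝ)) (k : ℕ) (hcard : V.card = k)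
    (hvert : ∀ v ∈ V, v ∉ convexHull ℝ ((V.erase v : Finset (ℝ × ℝ)) : Set (ℝ × ℝ)))
    (H : Finset ((ℝ × ℝ) →ᵃ[ℝ] ℝ))
    (hinter : ⋂ f ∈ H, {x : ℝ × ℝ | 0 ≤ f x} = convexHull ℝ (V : Set (ℝ × ℝ))) :
    k ≤ H.card := by
  classical
  subst hcard
  have hV : ∀ v ∈ (V : Set (ℝ × ℝ)), v ∉ convexHull ℝ ((V : Set (ℝ × ℝ)) \ {v}) := by
    simpa [coe_erase] using hvert
  have hdim : finrank ℝ (ℝ × ℝ) = 2 := by simp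
  let incident (v : ℝ × ℝ) (f : (ℝ × ℝ) →ᵃ[ℝ] ℝ) : Prop := f v = 0
  have hvertex : ∀ v ∈ V, 2 ≤ #({f ∈ H | f.linear ≠ 0}.bipartiteAbove incident v) := by
    intro v hv
    have hext := mem_extremePoints_convexHull_of_notMem_convexHull_sdiff hv (hV v hv)
    rw [← hinter] at hext
    simpa [bipartiteAbove, filter_filter, incident, hdim] using
      finrank_le_card_active_of_mem_extremePoints hext
  have hedge : ∀ f ∈ {f ∈ H | f.linear ≠ 0}, #(V.bipartiteBelow incident f) ≤ 2 := by
    intro f hf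
    refine card_le_two_of_collinear_of_subset hV (coe_subset.mpr (filter_subset _ _)) ?_
    exact (f.collinear_preimage_singleton hdim (mem_filter.mp hf).2 0).subset
      fun x hx ↦ (mem_filter.mp hx).2
  have := card_mul_le_card_mul incident hvertex hedge
  have := card_filter_le H fun f ↦ f.linear ≠ 0
  omega
end
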